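/- arXiv:2103.14742 — 5 statements merged into one kernel-verified Lean document; each statement's English description precedes it below -/
import Mathlib

section
/- Let P : ℝ × ℝ → ℝ be jointly continuous, and let x₁, x₂ : ℝ → ℝ be continuous functions with x₁(α) < 0 < x₂(α) for all α ≥ 0. Assume: (i) P(0, x) > 0 for every x > 0; (ii) P(α, x) < x for every α > 0 and every x ∈ ℝ. Then there exist a sequence (α_k) of positive real numbers with α_k → 0 and a sequence (m_k) of natural numbers with m_k → ∞ such that for every k, the m_k-fold iterate of the map x ↦ P(α_k, x) applied to x₂(α_k) equals x₁(α_k). -/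
/-!
For a parameter `α > 0` the return map has no fixed point and lies below the diagonal, so every
orbit decreases to `-∞` and in particular the orbit of `x₂(α)` eventually falls below `x₁(α)`.
At `α = 0` the orbit of `x₂(0)` stays positive, hence above `x₁(0)`. For a fixed number of
iterates `m`, the difference between the `m`-th iterate of `x₂(α)` and `x₁(α)` is continuous in
`α`, so the intermediate value theorem yields a connection at some `α ∈ (0, β]`; the number of
iterates may be taken as large as we like, and `β` as small as we like.
-/

open Filter Function Set

theorem tendsto_iterate_atBot_of_lt_self {α : Type*} [ConditionallyCompleteLinearOrder α]
    [TopologicalSpace α] [OrderTopology α] {f : α → α} (hf : Continuous f)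
    (hlt : ∀ x, f x < x) (x : α) : Tendsto (fun n => f^[n] x) atTop atBot := by
  have hanti : Antitone fun n => f^[n] x :=
    antitone_nat_of_succ_le fun n => by rw [iterate_succ_apply']; exact (hlt _).le
  refine (tendsto_atTop_of_antitone hanti).resolve_right ?_
  rintro ⟨y, hy⟩
  -- a finite limit of the orbit would be a fixed point
  exact (hlt y).ne (isFixedPt_of_tendsto_iterate hy hf.continuousAt)

theorem continuous_iterate_apply_param {A X : Type*} [TopologicalSpace A] [TopologicalSpace X]
    {P : A × X → X} (hP : Continuous P) {x₀ : A → X} (hx₀ : Continuous x₀) (m : ℕ) :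
    Continuous fun a => (fun x => P (a, x))^[m] (x₀ a) := by
  induction m with
  | zero => exact hx₀
  | succ m ih =>
    simp only [iterate_succ_apply']
    exact hP.comp (continuous_id.prodMk ih)

theorem exists_mem_Ioc_iterate_eq_of_forall_lt_self {P : ℝ × ℝ → ℝ} (hP : Continuous P)
    {x₁ x₂ : ℝ → ℝ} (hx₁ : Continuous x₁) (hx₂ : Continuous x₂)
    (hstart : ∀ m, x₁ 0 < (fun x => P (0, x))^[m] (x₂ 0))
    {β : ℝ} (hβ : 0 < β) (hdec : ∀ x, P (β, x) < x) (k : ℕ) :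
    ∃ a ∈ Ioc 0 β, ∃ m ≥ k, (fun x => P (a, x))^[m] (x₂ a) = x₁ a := by
  have hbelow : ∀ᶠ m in atTop, (fun x => P (β, x))^[m] (x₂ β) < x₁ β :=
    (tendsto_iterate_atBot_of_lt_self (hP.comp (Continuous.prodMk_right β)) hdec _).eventually
      (eventually_lt_atBot (x₁ β))
  obtain ⟨m, hm, hkm⟩ := (hbelow.and (eventually_ge_atTop k)).exists
  have hgap : Continuous fun a => (fun x => P (a, x))^[m] (x₂ a) - x₁ a :=
    (continuous_iterate_apply_param hP hx₂ m).sub hx₁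
  have hzero : (0 : ℝ) ∈ Ico (_ - x₁ β) (_ - x₁ 0) :=
    ⟨(sub_neg.mpr hm).le, sub_pos.mpr (hstart m)⟩
  obtain ⟨a, ha, hga⟩ := intermediate_value_Ioc' hβ.le hgap.continuousOn hzero
  exact ⟨a, ha, m, hkm, sub_eq_zero.mp hga⟩

/-- Flashing heteroclinic connections at a semi-stable limit cycle
(Poincaré-map formulation of Theorem A.1). -/
theorem flashing_heteroclinic_at_semistable_cycle
    (P : ℝ × ℝ → ℝ) (hP : Continuous P)
    (x₁ x₂ : ℝ → ℝ) (hx₁ : Continuous x₁) (hx₂ : Continuous x₂)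
    (hsign : ∀ α : ℝ, 0 ≤ α → x₁ α < 0 ∧ 0 < x₂ α)
    (h0 : ∀ x : ℝ, 0 < x → 0 < P (0, x))
    (hdec : ∀ α : ℝ, 0 < α → ∀ x : ℝ, P (α, x) < x) :
    ∃ (α : ℕ → ℝ) (m : ℕ → ℕ),
      (∀ k, 0 < α k) ∧
      Filter.Tendsto α Filter.atTop (nhds 0) ∧
      Filter.Tendsto m Filter.atTop Filter.atTop ∧
      ∀ k, (fun x => P (α k, x))^[m k] (x₂ (α k)) = x₁ (α k) := by
  have hmaps : MapsTo (fun x => P (0, x)) (Ioi 0) (Ioi 0) := h0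
  have hstart : ∀ m, x₁ 0 < (fun x => P (0, x))^[m] (x₂ 0) := fun m =>
    (hsign 0 le_rfl).1.trans (hmaps.iterate m (hsign 0 le_rfl).2)
  have hconn (k : ℕ) : ∃ a ∈ Ioc 0 (1 / ((k : ℝ) + 1)), ∃ m ≥ k,
      (fun x => P (a, x))^[m] (x₂ a) = x₁ a :=
    exists_mem_Ioc_iterate_eq_of_forall_lt_self hP hx₁ hx₂ hstart
      Nat.one_div_pos_of_nat (hdec _ Nat.one_div_pos_of_nat) k
  choose α hα m hm hconn using hconn
  exact ⟨α, m, fun k => (hα k).1,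
    squeeze_zero (fun k => (hα k).1.le) (fun k => (hα k).2) tendsto_one_div_add_atTop_nhds_zero_nat,
    tendsto_atTop_mono hm tendsto_id, hconn⟩
end

section
/- Let P : ℝ × ℝ → ℝ be jointly continuous, and let x₁ : ℝ → ℝ be continuous with x₁(β) > 0 for all β ≥ 0. Assume: (i) P(0, x) > 0 for every x > 0; (ii) P(β, x) < x for every β > 0 and every x ∈ ℝ. Then there exist a sequence (β_k) of positive real numbers with β_k → 0 and a sequence (m_k) of natural numbers with m_k → ∞ such that for every k, the m_k-fold iterate of the map x ↦ P(β_k, x) applied to x₁(β_k) equals 0. -/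
/-!
For `β > 0` the orbit of `x₁ β` under `P (β, ·)` decreases strictly; being continuous without
fixed points, the map cannot have a bounded orbit, so the orbit becomes negative at arbitrarily
late times `m`. For `β = 0` the orbit stays positive. The intermediate value theorem applied to
`β ↦ P (β, ·)^[m] (x₁ β)` on `[0, β₀]` then yields a parameter in `(0, β₀]` whose `m`-th iterate
is `0`; letting `β₀ = 1 / (k + 1)` and `m ≥ k` gives the two sequences.
-/

open Function Set Filter Topology

lemma strictAnti_iterate_of_forall_lt {α : Type*} [Preorder α] {f : α → α}
    (hlt : ∀ x, f x < x) (x₀ : α) : StrictAnti fun n => f^[n] x₀ :=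
  strictAnti_nat_of_succ_lt fun n => by
    simpa only [iterate_succ_apply'] using hlt (f^[n] x₀)

section OrbitEscape

variable {α : Type*} [ConditionallyCompleteLinearOrder α] [TopologicalSpace α] [OrderTopology α]
  {f : α → α}

/-- A bounded orbit would converge to its infimum, which would be a fixed point. -/
lemma not_bddBelow_range_iterate_of_forall_lt (hf : Continuous f) (hlt : ∀ x, f x < x)
    (x₀ : α) : ¬ BddBelow (range fun n => f^[n] x₀) := fun hbdd =>
  have hlim := tendsto_atTop_ciInf (strictAnti_iterate_of_forall_lt hlt x₀).antitone hbdd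
  (hlt _).ne (isFixedPt_of_tendsto_iterate hlim hf.continuousAt)

lemma exists_ge_iterate_lt_of_forall_lt (hf : Continuous f) (hlt : ∀ x, f x < x)
    (x₀ c : α) (k : ℕ) : ∃ m ≥ k, f^[m] x₀ < c := by
  obtain ⟨n, hn⟩ : ∃ n, f^[n] x₀ < c := by
    by_contra! h
    exact not_bddBelow_range_iterate_of_forall_lt hf hlt x₀ ⟨c, forall_mem_range.2 h⟩
  refine ⟨max n k, le_max_right n k, lt_of_le_of_lt ?_ hn⟩
  exact (strictAnti_iterate_of_forall_lt hlt x₀).antitone (le_max_left n k)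

end OrbitEscape

lemma continuous_iterate_param {X Y : Type*} [TopologicalSpace X] [TopologicalSpace Y]
    {P : X × Y → Y} (hP : Continuous P) {y₀ : X → Y} (hy₀ : Continuous y₀) (n : ℕ) :
    Continuous fun β => (fun y => P (β, y))^[n] (y₀ β) := by
  induction n with
  | zero => simpa only [iterate_zero, id] using hy₀
  | succ n ih =>
    simp only [iterate_succ_apply']
    exact hP.comp (continuous_id.prodMk ih)

lemma exists_mem_Ioc_iterate_eq_zero {P : ℝ × ℝ → ℝ} (hP : Continuous P)
    {x₁ : ℝ → ℝ} (hx₁ : Continuous x₁)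
    (hpos : ∀ n, 0 < (fun x => P (0, x))^[n] (x₁ 0))
    (hdec : ∀ β : ℝ, 0 < β → ∀ x : ℝ, P (β, x) < x) {β₀ : ℝ} (hβ₀ : 0 < β₀) (k : ℕ) :
    ∃ b ∈ Ioc 0 β₀, ∃ m ≥ k, (fun x => P (b, x))^[m] (x₁ b) = 0 := by
  obtain ⟨m, hkm, hneg⟩ := exists_ge_iterate_lt_of_forall_lt
    (hP.comp (Continuous.prodMk_right β₀)) (hdec β₀ hβ₀) (x₁ β₀) 0 k
  obtain ⟨b, hb, hzero⟩ := intermediate_value_Icc' hβ₀.le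
    (continuous_iterate_param hP hx₁ m).continuousOn ⟨hneg.le, (hpos m).le⟩
  have hb0 : b ≠ 0 := by
    rintro rfl
    exact (hpos m).ne' hzero
  exact ⟨b, ⟨lt_of_le_of_ne hb.1 hb0.symm, hb.2⟩, m, hkm, hzero⟩

/-- Flashing heteroclinic connections at a homoclinic bifurcation
(Poincaré-map formulation of Theorem A.2). -/
theorem flashing_heteroclinic_at_homoclinic_bifurcation
    (P : ℝ × ℝ → ℝ) (hP : Continuous P)
    (x₁ : ℝ → ℝ) (hx₁ : Continuous x₁)
    (hsign : ∀ β : ℝ, 0 ≤ β → 0 < x₁ β)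
    (h0 : ∀ x : ℝ, 0 < x → 0 < P (0, x))
    (hdec : ∀ β : ℝ, 0 < β → ∀ x : ℝ, P (β, x) < x) :
    ∃ (β : ℕ → ℝ) (m : ℕ → ℕ),
      (∀ k, 0 < β k) ∧
      Filter.Tendsto β Filter.atTop (nhds 0) ∧
      Filter.Tendsto m Filter.atTop Filter.atTop ∧
      ∀ k, (fun x => P (β k, x))^[m k] (x₁ (β k)) = 0 := by
  have hpos (n : ℕ) : 0 < (fun x => P (0, x))^[n] (x₁ 0) :=
    MapsTo.iterate (s := Ioi 0) h0 n (hsign 0 le_rfl)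
  choose β hβ m hkm hzero using fun k : ℕ =>
    exists_mem_Ioc_iterate_eq_zero hP hx₁ hpos hdec (Nat.one_div_pos_of_nat (n := k)) k
  refine ⟨β, m, fun k => (hβ k).1, ?_, tendsto_atTop_mono hkm tendsto_id, hzero⟩
  exact squeeze_zero (fun k => (hβ k).1.le) (fun k => (hβ k).2)
    tendsto_one_div_add_atTop_nhds_zero_nat
end

section
/- Let G(x,y) = y(y − x(1−x)), and for real parameters a, b, c let f(x,y) = a x + b y + c x y − a x² and g(x,y) = (a+b) y − (2a+2b+c) x y + 2 c y². Then there exists a polynomial function h : ℝ² → ℝ such that f(x,y)·∂G/∂x(x,y) + g(x,y)·∂G/∂y(x,y) = h(x,y)·G(x,y) for all (x,y) ∈ ℝ²; in particular, for every (x,y) with G(x,y) = 0, the vector (f(x,y), g(x,y)) is orthogonal to ∇G(x,y), so the algebraic variety Γ = G^{-1}(0) (the union of the parabola y = x(1−x) and the x-axis) is invariant under the planar vector field (f, g). -/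
/-- The variety `Γ = G⁻¹(0)`, union of the parabola `y = x(1-x)` and the
`x`-axis, is invariant under the planar vector field `(f, g)`:
`f·∂G/∂x + g·∂G/∂y` is a polynomial multiple of `G`, so `(f, g)` is
orthogonal to `∇G` on `Γ`. -/
theorem monodromic_variety_invariant (a b c : ℝ) :
    let G : ℝ → ℝ → ℝ := fun x y => y * (y - x * (1 - x))
    let f : ℝ → ℝ → ℝ := fun x y => a * x + b * y + c * x * y - a * x ^ 2
    let g : ℝ → ℝ → ℝ := fun x y =>
      (a + b) * y - (2 * a + 2 * b + c) * x * y + 2 * c * y ^ 2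
    ∃ p : MvPolynomial (Fin 2) ℝ,
      (∀ x y : ℝ,
        f x y * deriv (fun s => G s y) x + g x y * deriv (fun s => G x s) y =
          MvPolynomial.eval ![x, y] p * G x y) ∧
      (∀ x y : ℝ, G x y = 0 →
        f x y * deriv (fun s => G s y) x + g x y * deriv (fun s => G x s) y
          = 0) := by
  intro G f g
  have hGx : ∀ x y : ℝ, deriv (fun s => G s y) x = y * (2 * x - 1) := by
    intro x y
    have h : HasDerivAt (fun s : ℝ => y * (y - s * (1 - s))) (y * (2 * x - 1)) x := by
      have h1 : HasDerivAt (fun s : ℝ => s * (1 - s)) (1 * (1 - x) + x * (0 - 1)) x :=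
        (hasDerivAt_id x).mul ((hasDerivAt_const x (1:ℝ)).sub (hasDerivAt_id x))
      have h2 : HasDerivAt (fun s : ℝ => y * (y - s * (1 - s)))
          (y * (0 - (1 * (1 - x) + x * (0 - 1)))) x := ((hasDerivAt_const x y).sub h1).const_mul y
      convert h2 using 1
      ring
    exact h.deriv
  have hGy : ∀ x y : ℝ, deriv (fun s => G x s) y = 2 * y - x * (1 - x) := by
    intro x y
    have h : HasDerivAt (fun s : ℝ => s * (s - x * (1 - x))) (2 * y - x * (1 - x)) y := by
      have h1 : HasDerivAt (fun s : ℝ => s * (s - x * (1 - x)))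
          (1 * (y - x * (1 - x)) + y * (1 - 0)) y :=
        (hasDerivAt_id y).mul ((hasDerivAt_id y).sub (hasDerivAt_const y (x * (1 - x))))
      convert h1 using 1
      ring
    exact h.deriv
  refine ⟨MvPolynomial.C (2 * a + b)
      - MvPolynomial.C (4 * a + 2 * b + c) * MvPolynomial.X 0
      + MvPolynomial.C (4 * c) * MvPolynomial.X 1, ?_, ?_⟩
  · intro x y
    rw [hGx, hGy]
    simp only [G, f, g, map_add, map_sub, map_mul, MvPolynomial.eval_C, MvPolynomial.eval_X,
      Matrix.cons_val_zero, Matrix.cons_val_one, Matrix.head_cons]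
    ring
  · intro x y hG
    rw [hGx, hGy]
    simp only [G] at hG
    rcases mul_eq_zero.mp hG with h0 | h0
    · simp only [f, g, h0]; ring
    · have hy : y = x * (1 - x) := by linarith
      simp only [f, g, hy]; ring
end

section
/- Let a, b, c be real numbers with a + b + c·u < 0 for all u ∈ [0,1]. If u : ℝ → ℝ is differentiable and satisfies u'(t) = u(t)(1 − u(t))(a + b + c·u(t)) for all t ∈ ℝ, and u(0) ∈ (0,1), then u(t) ∈ (0,1) for all t ∈ ℝ, u is strictly decreasing, u(t) → 0 as t → +∞, and u(t) → 1 as t → −∞. Consequently the curve t ↦ (u(t), u(t)(1−u(t))) is a heteroclinic orbit of system M lying on the parabola y = x(1−x), connecting the equilibrium (1,0) (as t → −∞) to the equilibrium (0,0) (as t → +∞). -/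
open Set Filter Topology

/-- If `a + b + c·u < 0` on `[0,1]`, then any solution of
`u' = u(1-u)(a+b+cu)` starting in `(0,1)` stays in `(0,1)`, is strictly
decreasing, tends to `0` as `t → +∞` and to `1` as `t → -∞`; consequently
`t ↦ (u(t), u(t)(1-u(t)))` is a heteroclinic orbit of system M on the
parabola connecting `(1,0)` (as `t → -∞`) to `(0,0)` (as `t → +∞`). -/
theorem parabola_heteroclinic_orbit (a b c : ℝ)
    (hneg : ∀ u : ℝ, u ∈ Set.Icc (0 : ℝ) 1 → a + b + c * u < 0)
    (u : ℝ → ℝ) (hu : Differentiable ℝ u)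
    (hode : ∀ t : ℝ, deriv u t = u t * (1 - u t) * (a + b + c * u t))
    (h0 : u 0 ∈ Set.Ioo (0 : ℝ) 1) :
    (∀ t : ℝ, u t ∈ Set.Ioo (0 : ℝ) 1) ∧
    StrictAnti u ∧
    Filter.Tendsto u Filter.atTop (nhds 0) ∧
    Filter.Tendsto u Filter.atBot (nhds 1) ∧
    (let f : ℝ → ℝ → ℝ := fun x y => a * x + b * y + c * x * y - a * x ^ 2
     let g : ℝ → ℝ → ℝ := fun x y =>
       (a + b) * y - (2 * a + 2 * b + c) * x * y + 2 * c * y ^ 2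
     let γ : ℝ → ℝ × ℝ := fun t => (u t, u t * (1 - u t))
     (∀ t : ℝ,
        deriv u t = f (γ t).1 (γ t).2 ∧
        deriv (fun s => u s * (1 - u s)) t = g (γ t).1 (γ t).2) ∧
     Filter.Tendsto γ Filter.atBot (nhds ((1 : ℝ), (0 : ℝ))) ∧
     Filter.Tendsto γ Filter.atTop (nhds ((0 : ℝ), (0 : ℝ)))) := by
  set F : ℝ → ℝ := fun x => x * (1 - x) * (a + b + c * x) with hF
  set F' : ℝ → ℝ := fun x => (a + b) + 2 * (c - a - b) * x - 3 * c * x ^ 2 with hF'def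
  have hF' : ∀ x : ℝ, HasDerivAt F (F' x) x := by
    intro x
    have h : HasDerivAt F _ x := ((hasDerivAt_id x).mul ((hasDerivAt_const x (1:ℝ)).sub (hasDerivAt_id x))).mul
      (((hasDerivAt_id x).const_mul c).const_add (a + b))
    convert h using 1
    simp only [hF'def, id_eq, mul_one, zero_sub, Pi.sub_apply, Pi.mul_apply]
    ring
  have hFc : Continuous F := by
    simp only [hF]; continuity
  have hF'c : Continuous F' := by
    simp only [hF'def]; continuity
  have hderiv : ∀ t, HasDerivAt u (F (u t)) t := by
    intro t
    have h := (hu t).hasDerivAt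
    rwa [hode t] at h
  -- key uniqueness lemma: if u hits an equilibrium value r, then u 0 = r
  have key : ∀ r : ℝ, F r = 0 → (∃ t, u t = r) → u 0 = r := by
    rintro r hr ⟨t2, ht2⟩
    set a' : ℝ := min t2 0 - 1 with ha'
    set b' : ℝ := max t2 0 + 1 with hb'
    obtain ⟨M0, hM0⟩ := (isCompact_Icc (a := a') (b := b')).exists_bound_of_continuousOn
      hu.continuous.continuousOn
    set M : ℝ := max M0 (|r| + 1) with hM
    obtain ⟨C, hC⟩ := (isCompact_Icc (a := -M) (b := M)).exists_bound_of_continuousOn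
      hF'c.continuousOn
    have hlip : LipschitzOnWith C.toNNReal F (Icc (-M) M) := by
      apply Convex.lipschitzOnWith_of_nnnorm_deriv_le (fun x _ => (hF' x).differentiableAt)
        (fun x hx => ?_) (convex_Icc _ _)
      rw [← NNReal.coe_le_coe, coe_nnnorm, Real.coe_toNNReal']
      calc ‖deriv F x‖ = ‖F' x‖ := by rw [(hF' x).deriv]
        _ ≤ C := hC x hx
        _ ≤ max C 0 := le_max_left _ _
    have husmem : ∀ t ∈ Ioo a' b', u t ∈ Icc (-M) M := by
      intro t ht
      have h1 : ‖u t‖ ≤ M0 := hM0 t ⟨ht.1.le, ht.2.le⟩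
      have h2 : |u t| ≤ M := le_trans h1 (le_max_left _ _)
      rw [abs_le] at h2
      exact ⟨h2.1, h2.2⟩
    have hrmem : r ∈ Icc (-M) M := by
      have : |r| ≤ M := le_trans (by linarith [abs_nonneg r]) (le_max_right M0 (|r| + 1))
      rw [abs_le] at this; exact ⟨this.1, this.2⟩
    have heq := ODE_solution_unique_of_mem_Icc
      (v := fun _ x => F x) (s := fun _ => Icc (-M) M)
      (fun _ _ => hlip)
      (t₀ := t2) (a := a') (b := b')
      ⟨by rw [ha']; linarith [min_le_left t2 0], by rw [hb']; linarith [le_max_left t2 0]⟩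
      hu.continuous.continuousOn
      (fun t _ => hderiv t)
      husmem
      continuousOn_const
      (fun t _ => by simpa [hr] using hasDerivAt_const t r)
      (fun t _ => hrmem)
      (by simpa using ht2)
    have h0' : (0 : ℝ) ∈ Icc a' b' := by
      constructor
      · rw [ha']; linarith [min_le_right t2 0]
      · rw [hb']; linarith [le_max_right t2 0]
    exact heq h0'
  -- invariance
  have hF0 : F 0 = 0 := by simp [hF]
  have hF1 : F 1 = 0 := by simp [hF]
  have hmem : ∀ t : ℝ, u t ∈ Set.Ioo (0 : ℝ) 1 := by
    intro t
    by_contra hc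
    simp only [Set.mem_Ioo, not_and_or, not_lt] at hc
    rcases hc with h | h
    · have : (0 : ℝ) ∈ uIcc (u t) (u 0) := by
        rw [Set.mem_uIcc]; left; exact ⟨h, h0.1.le⟩
      obtain ⟨s, _, hs⟩ := intermediate_value_uIcc hu.continuous.continuousOn this
      exact absurd (key 0 hF0 ⟨s, hs⟩) (ne_of_gt h0.1)
    · have : (1 : ℝ) ∈ uIcc (u t) (u 0) := by
        rw [Set.mem_uIcc]; right; exact ⟨h0.2.le, h⟩
      obtain ⟨s, _, hs⟩ := intermediate_value_uIcc hu.continuous.continuousOn this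
      exact absurd (key 1 hF1 ⟨s, hs⟩) (ne_of_lt h0.2)
  -- F is negative on (0,1)
  have hFneg : ∀ x : ℝ, x ∈ Set.Ioo (0:ℝ) 1 → F x < 0 := by
    intro x hx
    have h1 : 0 < x * (1 - x) := mul_pos hx.1 (by linarith [hx.2])
    have h2 : a + b + c * x < 0 := hneg x ⟨hx.1.le, hx.2.le⟩
    exact mul_neg_of_pos_of_neg h1 h2
  -- strict antitonicity
  have hanti : StrictAnti u := by
    apply strictAnti_of_deriv_neg
    intro t
    rw [(hderiv t).deriv]
    exact hFneg _ (hmem t)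
  have hA : Antitone u := hanti.antitone
  -- limits
  have hbddB : BddBelow (Set.range u) := ⟨0, by rintro y ⟨t, rfl⟩; exact (hmem t).1.le⟩
  have hbddA : BddAbove (Set.range u) := ⟨1, by rintro y ⟨t, rfl⟩; exact (hmem t).2.le⟩
  set L : ℝ := ⨅ t, u t with hLdef
  set S : ℝ := ⨆ t, u t with hSdef
  have hL0 : 0 ≤ L := le_ciInf fun t => (hmem t).1.le
  have hS1 : S ≤ 1 := ciSup_le fun t => (hmem t).2.le
  have hLu0 : L ≤ u 0 := ciInf_le hbddB 0
  have hu0S : u 0 ≤ S := le_ciSup hbddA 0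
  have htopL : Tendsto u atTop (𝓝 L) := tendsto_atTop_ciInf hA hbddB
  have hbotS : Tendsto u atBot (𝓝 S) := tendsto_atBot_ciSup hA hbddA
  -- auxiliary: derivative of the shifted function
  have hgd : ∀ (δ : ℝ) (x : ℝ), HasDerivAt (fun t => u t + δ * t) (F (u x) + δ) x := by
    intro δ x
    have h := (hderiv x).add ((hasDerivAt_id x).const_mul δ)
    simp only [mul_one] at h; exact h
  have hgc : ∀ δ : ℝ, Continuous (fun t => u t + δ * t) :=
    fun δ => hu.continuous.add (continuous_const.mul continuous_id)
  -- L = 0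
  have hLzero : L = 0 := by
    by_contra hne
    have hLpos : 0 < L := lt_of_le_of_ne hL0 (Ne.symm hne)
    obtain ⟨x0, hx0mem, hmax⟩ := (isCompact_Icc (a := L) (b := u 0)).exists_isMaxOn
      (Set.nonempty_Icc.mpr hLu0) hFc.continuousOn
    have hx0 : x0 ∈ Set.Ioo (0:ℝ) 1 :=
      ⟨lt_of_lt_of_le hLpos hx0mem.1, lt_of_le_of_lt hx0mem.2 h0.2⟩
    set δ : ℝ := -F x0 with hδdef
    have hδpos : 0 < δ := by
      rw [hδdef]; linarith [hFneg x0 hx0]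
    have hganti : AntitoneOn (fun t => u t + δ * t) (Ici 0) := by
      apply antitoneOn_of_deriv_nonpos (convex_Ici 0) (hgc δ).continuousOn
        (fun x _ => (hgd δ x).differentiableAt.differentiableWithinAt)
      intro x hx
      rw [interior_Ici] at hx
      rw [(hgd δ x).deriv]
      have hmem' : u x ∈ Icc L (u 0) := ⟨ciInf_le hbddB x, hA hx.le⟩
      have h4 : F (u x) ≤ F x0 := hmax hmem'
      rw [hδdef]; linarith
    have hbound : u ((u 0 - L) / δ + 1) + δ * ((u 0 - L) / δ + 1) ≤ u 0 + δ * 0 := by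
      have ht0 : (0:ℝ) ≤ (u 0 - L) / δ + 1 := by
        have : 0 ≤ (u 0 - L) / δ := div_nonneg (by linarith) hδpos.le
        linarith
      exact hganti self_mem_Ici (mem_Ici.mpr ht0) ht0
    have h2 : L ≤ u ((u 0 - L) / δ + 1) := ciInf_le hbddB _
    have h3 : δ * ((u 0 - L) / δ + 1) = (u 0 - L) + δ := by
      field_simp
    linarith
  -- S = 1
  have hSone : S = 1 := by
    by_contra hne
    have hSlt : S < 1 := lt_of_le_of_ne hS1 hne
    obtain ⟨x0, hx0mem, hmax⟩ := (isCompact_Icc (a := u 0) (b := S)).exists_isMaxOn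
      (Set.nonempty_Icc.mpr hu0S) hFc.continuousOn
    have hx0 : x0 ∈ Set.Ioo (0:ℝ) 1 :=
      ⟨lt_of_lt_of_le h0.1 hx0mem.1, lt_of_le_of_lt hx0mem.2 hSlt⟩
    set δ : ℝ := -F x0 with hδdef
    have hδpos : 0 < δ := by
      rw [hδdef]; linarith [hFneg x0 hx0]
    have hganti : AntitoneOn (fun t => u t + δ * t) (Iic 0) := by
      apply antitoneOn_of_deriv_nonpos (convex_Iic 0) (hgc δ).continuousOn
        (fun x _ => (hgd δ x).differentiableAt.differentiableWithinAt)
      intro x hx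
      rw [interior_Iic] at hx
      rw [(hgd δ x).deriv]
      have hmem' : u x ∈ Icc (u 0) S := ⟨hA hx.le, le_ciSup hbddA x⟩
      have h4 : F (u x) ≤ F x0 := hmax hmem'
      rw [hδdef]; linarith
    have ht0 : -((1 - u 0) / δ + 1) ≤ (0:ℝ) := by
      have : 0 ≤ (1 - u 0) / δ := div_nonneg (by linarith [h0.2]) hδpos.le
      linarith
    have hbound : u 0 + δ * 0 ≤ u (-((1 - u 0) / δ + 1)) + δ * (-((1 - u 0) / δ + 1)) :=
      hganti (mem_Iic.mpr ht0) self_mem_Iic ht0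
    have h2 : u (-((1 - u 0) / δ + 1)) < 1 := (hmem _).2
    have h3 : δ * (-((1 - u 0) / δ + 1)) = -((1 - u 0) + δ) := by
      field_simp
    linarith
  rw [hLzero] at htopL
  rw [hSone] at hbotS
  refine ⟨hmem, hanti, htopL, hbotS, ?_⟩
  intro f g γ
  have hq : ∀ t : ℝ, deriv (fun s => u s * (1 - u s)) t
      = F (u t) * (1 - u t) + u t * (0 - F (u t)) := fun t =>
    ((hderiv t).mul ((hasDerivAt_const t (1:ℝ)).sub (hderiv t))).deriv
  refine ⟨fun t => ⟨?_, ?_⟩, ?_, ?_⟩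
  · show deriv u t = a * u t + b * (u t * (1 - u t)) + c * u t * (u t * (1 - u t)) - a * u t ^ 2
    rw [hode t]; ring
  · show deriv (fun s => u s * (1 - u s)) t = (a + b) * (u t * (1 - u t))
      - (2 * a + 2 * b + c) * u t * (u t * (1 - u t)) + 2 * c * (u t * (1 - u t)) ^ 2
    rw [hq t]; simp only [hF]; ring
  · have h2 : Tendsto (fun t => u t * (1 - u t)) atBot (𝓝 (1 * (1 - 1))) :=
      hbotS.mul (tendsto_const_nhds.sub hbotS)
    rw [show (1:ℝ) * (1 - 1) = 0 by norm_num] at h2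
    exact hbotS.prodMk_nhds h2
  · have h2 : Tendsto (fun t => u t * (1 - u t)) atTop (𝓝 (0 * (1 - 0))) :=
      htopL.mul (tendsto_const_nhds.sub htopL)
    rw [show (0:ℝ) * (1 - 0) = 0 by norm_num] at h2
    exact htopL.prodMk_nhds h2
end

section
/- Let a = 1, b = −3, and let c be a real number with c < 3. Let x(t) = 1/(1 + e^{−t}), let T(t) = −1 + (2 − c) x(t) be the divergence f_x + g_y of system M evaluated at (x(t), 0), let φ(t) = exp(−∫₀ᵗ T(τ) dτ), and let ψ(t) = −x(t)²(1 − x(t))². Then the function t ↦ φ(t)ψ(t) is integrable on ℝ and the Melnikov integral M = ∫_{−∞}^{∞} φ(t)ψ(t) dt is strictly negative. -/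
open MeasureTheory

private lemma melnikov_int_T (c t : ℝ) :
    (∫ τ in (0:ℝ)..t, (-1 + (2-c) * (1 / (1 + Real.exp (-τ))))) =
      -t + (2-c) * (Real.log (1 + Real.exp t) - Real.log 2) := by
  have hder : ∀ τ : ℝ, HasDerivAt (fun τ => -τ + (2-c) * Real.log (1 + Real.exp τ))
      (-1 + (2-c) * (1/(1 + Real.exp (-τ)))) τ := by
    intro τ
    have h1 : HasDerivAt (fun τ : ℝ => 1 + Real.exp τ) (Real.exp τ) τ :=
      (Real.hasDerivAt_exp τ).const_add 1
    have hpos : (0:ℝ) < 1 + Real.exp τ := by positivity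
    have h2 : HasDerivAt (fun τ : ℝ => Real.log (1 + Real.exp τ))
        (Real.exp τ / (1 + Real.exp τ)) τ := h1.log hpos.ne'
    have h3 : HasDerivAt (fun τ => -τ + (2-c) * Real.log (1 + Real.exp τ))
        (-1 + (2-c) * (Real.exp τ / (1 + Real.exp τ))) τ :=
      ((hasDerivAt_id τ).neg).add (h2.const_mul (2-c))
    convert h3 using 1
    rw [Real.exp_neg]
    have := Real.exp_pos τ
    field_simp
    ring
  have hcont : Continuous fun τ : ℝ => -1 + (2-c) * (1/(1 + Real.exp (-τ))) := by
    refine continuous_const.add (continuous_const.mul (continuous_const.div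
      (continuous_const.add (Real.continuous_exp.comp continuous_neg)) fun τ => ?_))
    positivity
  rw [intervalIntegral.integral_eq_sub_of_hasDerivAt (fun τ _ => hder τ)
    (hcont.intervalIntegrable 0 t)]
  simp [Real.exp_zero]
  ring_nf

private lemma melnikov_integrand_eq (c t : ℝ) :
    Real.exp (-(∫ τ in (0:ℝ)..t, (-1 + (2-c) * (1 / (1 + Real.exp (-τ)))))) *
      (-(1 / (1 + Real.exp (-t))) ^ 2 * (1 - 1 / (1 + Real.exp (-t))) ^ 2)
    = -((2:ℝ) ^ (2-c) * (Real.exp (3*t) * (1 + Real.exp t) ^ (c-6))) := by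
  rw [melnikov_int_T]
  have hu : (0:ℝ) < Real.exp t := Real.exp_pos t
  have hv : (0:ℝ) < 1 + Real.exp t := by positivity
  have hx : 1 / (1 + Real.exp (-t)) = Real.exp t / (1 + Real.exp t) := by
    rw [Real.exp_neg]; field_simp; ring
  have h2 : (2:ℝ) ^ (2-c) = Real.exp ((2-c) * Real.log 2) := by
    rw [Real.rpow_def_of_pos (by norm_num), mul_comm]
  have h3 : (1 + Real.exp t) ^ (c-6) = Real.exp ((c-6) * Real.log (1 + Real.exp t)) := by
    rw [Real.rpow_def_of_pos hv, mul_comm]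
  have key : Real.exp (-(-t + (2-c) * (Real.log (1 + Real.exp t) - Real.log 2)))
      = Real.exp t * (Real.exp ((c-6) * Real.log (1 + Real.exp t)) * (1 + Real.exp t)^4) *
        Real.exp ((2-c) * Real.log 2) := by
    rw [← Real.exp_log (show (0:ℝ) < (1 + Real.exp t)^4 by positivity), Real.log_pow,
      ← Real.exp_add, ← Real.exp_add, ← Real.exp_add]
    congr 1
    push_cast
    ring
  have h3t : Real.exp (3*t) = (Real.exp t)^3 := by
    rw [show (3:ℝ)*t = t+t+t by ring, Real.exp_add, Real.exp_add]; ring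
  rw [hx, h2, h3, key, h3t]
  have h1mu : 1 - Real.exp t / (1 + Real.exp t) = 1 / (1 + Real.exp t) := by field_simp; ring
  rw [h1mu]
  field_simp

private lemma melnikov_g_integrable {c : ℝ} (hc : c < 3) :
    Integrable (fun t => Real.exp (3*t) * (1 + Real.exp t) ^ (c-6)) := by
  set g : ℝ → ℝ := fun t => Real.exp (3*t) * (1 + Real.exp t) ^ (c-6) with hg
  have hcont : Continuous g := by
    apply (Real.continuous_exp.comp (continuous_const.mul continuous_id)).mul
    exact (continuous_const.add Real.continuous_exp).rpow_const
      (fun t => Or.inl (by simp only [Pi.add_apply]; positivity))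
  have hIoi : IntegrableOn g (Set.Ioi (0:ℝ)) := by
    refine Integrable.mono' (exp_neg_integrableOn_Ioi 0 (show (0:ℝ) < 3 - c by linarith))
      hcont.aestronglyMeasurable.restrict (Filter.Eventually.of_forall fun t => ?_)
    have h1 : (1 + Real.exp t) ^ (c-6) ≤ (Real.exp t) ^ (c-6) :=
      Real.rpow_le_rpow_of_nonpos (Real.exp_pos t) (by linarith [Real.exp_pos t])
        (by linarith)
    have h2 : (Real.exp t) ^ (c-6) = Real.exp (t * (c-6)) := by
      rw [← Real.exp_mul]
    have hgpos : 0 ≤ g t := by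
      have : (0:ℝ) < 1 + Real.exp t := by positivity
      positivity
    rw [Real.norm_eq_abs, abs_of_nonneg hgpos]
    calc g t ≤ Real.exp (3*t) * Real.exp (t * (c-6)) := by
          apply mul_le_mul_of_nonneg_left _ (Real.exp_pos _).le
          rw [← h2]; exact h1
      _ = Real.exp (-(3-c) * t) := by rw [← Real.exp_add]; ring_nf
  have hIic : IntegrableOn g (Set.Iic (0:ℝ)) := by
    refine Integrable.mono' (integrableOn_exp_Iic 0)
      hcont.aestronglyMeasurable.restrict ?_
    rw [ae_restrict_iff' measurableSet_Iic]
    refine Filter.Eventually.of_forall fun t ht => ?_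
    have hb : (1 + Real.exp t) ^ (c-6) ≤ 1 :=
      Real.rpow_le_one_of_one_le_of_nonpos (by linarith [Real.exp_pos t]) (by linarith)
    have hgpos : 0 ≤ g t := by
      have : (0:ℝ) < 1 + Real.exp t := by positivity
      positivity
    rw [Real.norm_eq_abs, abs_of_nonneg hgpos]
    calc g t ≤ Real.exp (3*t) * 1 := by
          apply mul_le_mul_of_nonneg_left hb (Real.exp_pos _).le
      _ = Real.exp (3*t) := mul_one _
      _ ≤ Real.exp t := Real.exp_le_exp.mpr (by simp at ht; linarith)
  have := hIic.union hIoi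
  rwa [Set.Iic_union_Ioi, integrableOn_univ] at this

/-- The Melnikov integral along the heteroclinic connection on the `x`-axis
of the monodromic example with `a = 1`, `b = -3`, `c < 3` is well defined
(the integrand is integrable) and strictly negative. -/
theorem melnikov_integral_neg (c : ℝ) (hc : c < 3) :
    let x : ℝ → ℝ := fun t => 1 / (1 + Real.exp (-t))
    let T : ℝ → ℝ := fun t => -1 + (2 - c) * x t
    let φ : ℝ → ℝ := fun t => Real.exp (-(∫ τ in (0 : ℝ)..t, T τ))
    let ψ : ℝ → ℝ := fun t => -(x t) ^ 2 * (1 - x t) ^ 2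
    Integrable (fun t => φ t * ψ t) ∧ (∫ t : ℝ, φ t * ψ t) < 0 := by
  intro x T φ ψ
  have heq : (fun t => φ t * ψ t)
      = fun t => -((2:ℝ) ^ (2-c) * (Real.exp (3*t) * (1 + Real.exp t) ^ (c-6))) :=
    funext fun t => melnikov_integrand_eq c t
  have hg := melnikov_g_integrable hc
  have hInt : Integrable (fun t => φ t * ψ t) := by
    rw [heq]
    exact (hg.const_mul _).neg
  refine ⟨hInt, ?_⟩
  have hposint : 0 < ∫ t : ℝ, (2:ℝ) ^ (2-c) * (Real.exp (3*t) * (1 + Real.exp t) ^ (c-6)) := by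
    rw [integral_pos_iff_support_of_nonneg _ (hg.const_mul _)]
    · have : Function.support (fun t => (2:ℝ) ^ (2-c) *
          (Real.exp (3*t) * (1 + Real.exp t) ^ (c-6))) = Set.univ := by
        ext t
        simp only [Function.mem_support, Set.mem_univ, iff_true]
        have h1 : (0:ℝ) < (2:ℝ) ^ (2-c) := Real.rpow_pos_of_pos (by norm_num) _
        have h2 : (0:ℝ) < 1 + Real.exp t := by positivity
        positivity
      rw [this]
      simp
    · intro t
      have h1 : (0:ℝ) ≤ (2:ℝ) ^ (2-c) := (Real.rpow_pos_of_pos (by norm_num) _).le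
      have h2 : (0:ℝ) < 1 + Real.exp t := by positivity
      positivity
  rw [heq]
  rw [integral_neg]
  linarith
end
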